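/- arXiv:1704.00986 — 2 statements merged into one kernel-verified Lean document; each statement's English description precedes it below -/
import Mathlib

section
/- Let P be a positive definite Hermitian matrix solving F₀P + PF₀† + G₀G₀† = 0, and let T be any matrix with T†T = P⁻¹. Define F_a = TF₀T⁻¹ and G_a = TG₀. Then F_a + F_a† + G_aG_a† = 0. -/
open Matrix
open scoped ComplexOrder

/-- If `P > 0` solves the Lyapunov equation `F₀ P + P F₀ᴴ + G₀ G₀ᴴ = 0` and `Tᴴ T = P⁻¹`
with `T` invertible, then `F_a = T F₀ T⁻¹`, `G_a = T G₀` satisfy the physical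
realizability condition `F_a + F_aᴴ + G_a G_aᴴ = 0`. -/
theorem physical_realizability_of_lyapunov {n m : ℕ}
    (F₀ : Matrix (Fin n) (Fin n) ℂ) (G₀ : Matrix (Fin n) (Fin m) ℂ)
    (P T : Matrix (Fin n) (Fin n) ℂ)
    (hP : P.PosDef)
    (hLyap : F₀ * P + P * F₀ᴴ + G₀ * G₀ᴴ = 0)
    (hT : IsUnit T.det)
    (hTP : Tᴴ * T = P⁻¹) :
    (T * F₀ * T⁻¹) + (T * F₀ * T⁻¹)ᴴ + (T * G₀) * (T * G₀)ᴴ = 0 := by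
  have hTH : IsUnit (Tᴴ).det := by
    rw [Matrix.det_conjTranspose]; exact hT.star
  have hPeq : P = T⁻¹ * Tᴴ⁻¹ := by
    have h1 : (Tᴴ * T)⁻¹ = P⁻¹⁻¹ := by rw [hTP]
    rw [Matrix.mul_inv_rev, Matrix.nonsing_inv_nonsing_inv P (isUnit_iff_ne_zero.mpr (ne_of_gt hP.det_pos))] at h1
    exact h1.symm
  have hPT : P * Tᴴ = T⁻¹ := by
    rw [hPeq, Matrix.mul_assoc, Matrix.nonsing_inv_mul _ hTH, Matrix.mul_one]
  have hTP2 : T * P = Tᴴ⁻¹ := by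
    rw [hPeq, ← Matrix.mul_assoc, Matrix.mul_nonsing_inv _ hT, Matrix.one_mul]
  have key : T * (F₀ * P + P * F₀ᴴ + G₀ * G₀ᴴ) * Tᴴ = 0 := by
    rw [hLyap, Matrix.mul_zero, Matrix.zero_mul]
  calc (T * F₀ * T⁻¹) + (T * F₀ * T⁻¹)ᴴ + (T * G₀) * (T * G₀)ᴴ
      = T * (F₀ * P + P * F₀ᴴ + G₀ * G₀ᴴ) * Tᴴ := by
        simp only [Matrix.mul_add, Matrix.add_mul]
        congr 1
        · congr 1
          · rw [← hPT]; noncomm_ring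
          · rw [Matrix.conjTranspose_mul, Matrix.conjTranspose_mul,
              Matrix.conjTranspose_nonsing_inv, ← hTP2]
            noncomm_ring
        · rw [Matrix.conjTranspose_mul]; simp [Matrix.mul_assoc]
    _ = 0 := key
end

section
/- If F_a + F_a† + G_aG_a† = 0, then every eigenvalue of F_a has nonpositive real part; moreover if (F_a, G_a) is controllable then every eigenvalue of F_a has strictly negative real part. -/
/-!
If `vᴴ` is a left eigenvector of `F` for `μ` (`v ᵥ* F = μ • v`), pairing
`F + Fᴴ + G Gᴴ = 0` with `v` on both sides gives
`2 Re μ ‖v‖² + ‖v G‖² = 0`, so `Re μ ≤ 0`. If `Re μ = 0` then `v G = 0`, hence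
`v Fᵏ G = μᵏ v G = 0` for all `k`: `v` annihilates the controllability matrix, which has full
row rank when `(F, G)` is controllable, so `v = 0`.
-/

open Matrix

/-- Controllability matrix `[G, FG, ..., F^{n-1}G]` has full rank `n`. -/
def Controllable {n m : ℕ} (F : Matrix (Fin n) (Fin n) ℂ)
    (G : Matrix (Fin n) (Fin m) ℂ) : Prop :=
  (Matrix.of (fun (i : Fin n) (p : Fin n × Fin m) => (F ^ (p.1 : ℕ) * G) i p.2)).rank = n

namespace Matrix

variable {ι κ : Type*} [Fintype ι]

theorem exists_vecMul_eq_smul_of_mem_spectrum {K : Type*} [Field K] [DecidableEq ι]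
    {A : Matrix ι ι K} {μ : K} (hμ : μ ∈ spectrum K A) : ∃ v ≠ 0, v ᵥ* A = μ • v := by
  rw [spectrum.mem_iff, isUnit_iff_isUnit_det, isUnit_iff_ne_zero, not_not] at hμ
  obtain ⟨v, hv0, hv⟩ := exists_vecMul_eq_zero_iff.2 hμ
  refine ⟨v, hv0, ?_⟩
  rwa [Algebra.algebraMap_eq_smul_one, vecMul_sub, vecMul_smul, vecMul_one, sub_eq_zero,
    eq_comm] at hv

theorem vecMul_pow_of_vecMul_eq_smul {R : Type*} [CommSemiring R] [DecidableEq ι]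
    {A : Matrix ι ι R} {μ : R} {v : ι → R} (hv : v ᵥ* A = μ • v) (k : ℕ) :
    v ᵥ* A ^ k = μ ^ k • v := by
  induction k with
  | zero => simp
  | succ k ih => rw [pow_succ, ← vecMul_vecMul, ih, smul_vecMul, hv, smul_smul, pow_succ]

theorem eq_zero_of_vecMul_eq_zero_of_rank_eq_card {K : Type*} [Field K] [Fintype κ]
    [DecidableEq ι] {C : Matrix ι κ K} (hC : C.rank = Fintype.card ι) {v : ι → K}
    (hv : v ᵥ* C = 0) : v = 0 := by
  have hsurj : Function.Surjective C.mulVecLin := by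
    rw [← LinearMap.range_eq_top]
    apply Submodule.eq_top_of_finrank_eq
    rw [← rank, hC, Module.finrank_fintype_fun_eq_card]
  funext i
  obtain ⟨x, hx⟩ := hsurj (Pi.single i 1)
  simpa [← hx, mulVecLin_apply, dotProduct_mulVec, hv] using (dotProduct_single_one v i).symm

open scoped ComplexOrder

variable [Fintype κ] {F : Matrix ι ι ℂ} {G : Matrix ι κ ℂ} {μ : ℂ} {v : ι → ℂ}

theorem two_re_mul_dotProduct_self_star_add_eq_zero (hFG : F + Fᴴ + G * Gᴴ = 0)
    (hv : v ᵥ* F = μ • v) :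
    ((2 * μ.re : ℝ) : ℂ) * (v ⬝ᵥ star v) + (v ᵥ* G) ⬝ᵥ star (v ᵥ* G) = 0 := by
  have hFH : Fᴴ *ᵥ star v = star μ • star v := by
    rw [← star_vecMul, hv, star_smul]
  have := congrArg (v ⬝ᵥ · *ᵥ star v) hFG
  simp only [zero_mulVec, dotProduct_zero, add_mulVec, dotProduct_add] at this
  rw [← Complex.add_conj, ← this, dotProduct_mulVec, hv, hFH, ← mulVec_mulVec,
    dotProduct_mulVec v G, ← star_vecMul]
  simp only [add_mul, smul_dotProduct, smul_eq_mul, RCLike.star_def, dotProduct_smul]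

theorem re_nonpos_of_vecMul_eq_smul (hFG : F + Fᴴ + G * Gᴴ = 0) (hv : v ᵥ* F = μ • v)
    (hv0 : v ≠ 0) : μ.re ≤ 0 := by
  have hv_sq : 0 < (v ⬝ᵥ star v).re := (Complex.pos_iff.1 <|
    (dotProduct_self_star_nonneg v).lt_of_ne' (dotProduct_self_star_eq_zero.not.2 hv0)).1
  have hGv_sq : 0 ≤ ((v ᵥ* G) ⬝ᵥ star (v ᵥ* G)).re :=
    (Complex.nonneg_iff.1 (dotProduct_self_star_nonneg _)).1
  have hbalance := congrArg Complex.re (two_re_mul_dotProduct_self_star_add_eq_zero hFG hv)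
  rw [Complex.add_re, Complex.re_ofReal_mul, Complex.zero_re] at hbalance
  nlinarith

theorem vecMul_eq_zero_of_re_eq_zero (hFG : F + Fᴴ + G * Gᴴ = 0) (hv : v ᵥ* F = μ • v)
    (hre : μ.re = 0) : v ᵥ* G = 0 :=
  dotProduct_self_star_eq_zero.1 <| by
    simpa [hre] using two_re_mul_dotProduct_self_star_add_eq_zero hFG hv

end Matrix

theorem Controllable.eq_zero_of_vecMul_pow_mul_eq_zero {n m : ℕ} {F : Matrix (Fin n) (Fin n) ℂ}
    {G : Matrix (Fin n) (Fin m) ℂ} (hFG : Controllable F G) {v : Fin n → ℂ}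
    (hv : ∀ k : ℕ, v ᵥ* (F ^ k * G) = 0) : v = 0 :=
  eq_zero_of_vecMul_eq_zero_of_rank_eq_card (hFG.trans (Fintype.card_fin n).symm)
    (funext fun p => congrFun (hv p.1) p.2)

/-- If `F_a + F_aᴴ + G_a G_aᴴ = 0` then every eigenvalue of `F_a` has nonpositive real
part; if moreover `(F_a, G_a)` is controllable, every eigenvalue has negative real part. -/
theorem eigenvalues_of_physically_realizable {n m : ℕ}
    (Fa : Matrix (Fin n) (Fin n) ℂ) (Ga : Matrix (Fin n) (Fin m) ℂ)
    (hpr : Fa + Faᴴ + Ga * Gaᴴ = 0) :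
    (∀ μ ∈ spectrum ℂ Fa, μ.re ≤ 0) ∧
    (Controllable Fa Ga → ∀ μ ∈ spectrum ℂ Fa, μ.re < 0) := by
  refine ⟨fun μ hμ => ?_, fun hctrl μ hμ => ?_⟩ <;>
    obtain ⟨v, hv0, hv⟩ := exists_vecMul_eq_smul_of_mem_spectrum hμ
  · exact re_nonpos_of_vecMul_eq_smul hpr hv hv0
  refine (re_nonpos_of_vecMul_eq_smul hpr hv hv0).lt_of_ne fun hre => hv0 ?_
  refine hctrl.eq_zero_of_vecMul_pow_mul_eq_zero fun k => ?_
  rw [← vecMul_vecMul, vecMul_pow_of_vecMul_eq_smul hv, smul_vecMul,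
    vecMul_eq_zero_of_re_eq_zero hpr hv hre, smul_zero]
end
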